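/- If U is a vertex cover of the vertex-cover lower-bound graph G_{x,y} of cardinality 4(k − 1) + 4·log k, then there exist indices i, j ∈ {0,…,k−1} such that none of the four nodes a_1^i, a_2^j, b_1^i, b_2^j belongs to U. -/
import Mathlib


/-- Vertices of the vertex-cover lower-bound graph.  The side `s : Bool`
distinguishes Alice (`false`, the `a`'s) from Bob (`true`, the `b`'s), and
`ℓ : Bool` distinguishes index `1` (`false`) from index `2` (`true`).
So `node false false i = a_1^i`, `node true true i = b_2^i`,
`f s ℓ h = f_S^h` and `t s ℓ h = t_S^h` for the corresponding set `S`. -/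
inductive VCVertex (k logk : ℕ) where
  | node (s ℓ : Bool) (i : Fin k)
  | f (s ℓ : Bool) (h : Fin logk)
  | t (s ℓ : Bool) (h : Fin logk)
deriving DecidableEq

/-- Base relation generating the edges of the vertex-cover lower-bound graph
`G_{x,y}`: the four cliques; each node joined to exactly its bit-nodes `bin`;
the 4-cycles `(f_{Aℓ}^h, t_{Aℓ}^h, f_{Bℓ}^h, t_{Bℓ}^h)`; and the input edges
`(a_1^i, a_2^j)` iff `x i j = 0` and `(b_1^i, b_2^j)` iff `y i j = 0`. -/
def vcRel (k logk : ℕ) (x y : Fin k → Fin k → Bool) (u v : VCVertex k logk) : Prop :=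
  (∃ (s ℓ : Bool) (i j : Fin k), i ≠ j ∧
    u = VCVertex.node s ℓ i ∧ v = VCVertex.node s ℓ j) ∨
  (∃ (s ℓ : Bool) (i : Fin k) (h : Fin logk), u = VCVertex.node s ℓ i ∧
    v = if i.val.testBit h.val then VCVertex.t s ℓ h else VCVertex.f s ℓ h) ∨
  (∃ (ℓ : Bool) (h : Fin logk),
    (u = VCVertex.f false ℓ h ∧ v = VCVertex.t false ℓ h) ∨
    (u = VCVertex.t false ℓ h ∧ v = VCVertex.f true ℓ h) ∨
    (u = VCVertex.f true ℓ h ∧ v = VCVertex.t true ℓ h) ∨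
    (u = VCVertex.t true ℓ h ∧ v = VCVertex.f false ℓ h)) ∨
  (∃ i j : Fin k, x i j = false ∧
    u = VCVertex.node false false i ∧ v = VCVertex.node false true j) ∨
  (∃ i j : Fin k, y i j = false ∧
    u = VCVertex.node true false i ∧ v = VCVertex.node true true j)

/-- The vertex-cover lower-bound graph `G_{x,y}`. -/
def vcGraph (k logk : ℕ) (x y : Fin k → Fin k → Bool) : SimpleGraph (VCVertex k logk) :=
  SimpleGraph.fromRel (vcRel k logk x y)

/-- `U` is a vertex cover: every edge has at least one endpoint in `U`. -/
def IsVertexCover {V : Type*} (G : SimpleGraph V) (U : Set V) : Prop :=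
  ∀ u v, G.Adj u v → u ∈ U ∨ v ∈ U


deriving instance Fintype for VCVertex

section VCAux

open VCVertex Finset

variable {k logk : ℕ} {x y : Fin k → Fin k → Bool} {U : Set (VCVertex k logk)}

lemma vc_adj {u v : VCVertex k logk} (hne : u ≠ v) (h : vcRel k logk x y u v) :
    (vcGraph k logk x y).Adj u v := by
  rw [vcGraph, SimpleGraph.fromRel_adj]; exact ⟨hne, Or.inl h⟩

lemma vc_cover_bin (hU : IsVertexCover (vcGraph k logk x y) U)
    (s ℓ : Bool) (i : Fin k) (hi : node s ℓ i ∉ U) (h : Fin logk) :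
    (if i.val.testBit h.val then (t s ℓ h : VCVertex k logk) else f s ℓ h) ∈ U := by
  have hadj : (vcGraph k logk x y).Adj (node s ℓ i)
      (if i.val.testBit h.val then t s ℓ h else f s ℓ h) := by
    apply vc_adj
    · split <;> simp
    · exact Or.inr (Or.inl ⟨s, ℓ, i, h, rfl, rfl⟩)
  rcases hU _ _ hadj with h1 | h1
  · exact absurd h1 hi
  · exact h1

/-- the four cycle edges give covered pairs -/
lemma vc_cycle_cover (hU : IsVertexCover (vcGraph k logk x y) U) (ℓ : Bool) (h : Fin logk) :
    ((f false ℓ h : VCVertex k logk) ∈ U ∨ t false ℓ h ∈ U) ∧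
    ((t false ℓ h : VCVertex k logk) ∈ U ∨ f true ℓ h ∈ U) ∧
    ((f true ℓ h : VCVertex k logk) ∈ U ∨ t true ℓ h ∈ U) ∧
    ((t true ℓ h : VCVertex k logk) ∈ U ∨ f false ℓ h ∈ U) := by
  refine ⟨hU _ _ (vc_adj ?_ ?_), hU _ _ (vc_adj ?_ ?_), hU _ _ (vc_adj ?_ ?_),
    hU _ _ (vc_adj ?_ ?_)⟩ <;>
  first
  | simp
  | exact Or.inr (Or.inr (Or.inl ⟨ℓ, h, Or.inl ⟨rfl, rfl⟩⟩))
  | exact Or.inr (Or.inr (Or.inl ⟨ℓ, h, Or.inr (Or.inl ⟨rfl, rfl⟩)⟩))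
  | exact Or.inr (Or.inr (Or.inl ⟨ℓ, h, Or.inr (Or.inr (Or.inl ⟨rfl, rfl⟩))⟩))
  | exact Or.inr (Or.inr (Or.inl ⟨ℓ, h, Or.inr (Or.inr (Or.inr ⟨rfl, rfl⟩))⟩))

/-- index for the partition: cliques and 4-cycles -/
def vcPart (k logk : ℕ) (F : Finset (VCVertex k logk)) :
    (Bool × Bool) ⊕ (Bool × Fin logk) → Finset (VCVertex k logk)
  | Sum.inl (s, ℓ) => Finset.univ.image (node s ℓ) ∩ F
  | Sum.inr (ℓ, h) =>
      ({f false ℓ h, t false ℓ h, f true ℓ h, t true ℓ h} : Finset _) ∩ F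

def vcb (k : ℕ) : (Bool × Bool) ⊕ (Bool × Fin logk) → ℕ
  | Sum.inl _ => k - 1
  | Sum.inr _ => 2

lemma vcPart_disjoint (F : Finset (VCVertex k logk)) :
    ∀ z z', z ≠ z' → Disjoint (vcPart k logk F z) (vcPart k logk F z') := by
  rintro (⟨s, ℓ⟩ | ⟨ℓ, h⟩) (⟨s', ℓ'⟩ | ⟨ℓ', h'⟩) hne <;>
    rw [Finset.disjoint_left] <;> intro v hv hv' <;>
    simp only [vcPart, Finset.mem_inter, Finset.mem_image, Finset.mem_insert,
      Finset.mem_singleton, Finset.mem_univ, true_and] at hv hv' <;>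
    obtain ⟨h1, -⟩ := hv <;> obtain ⟨h2, -⟩ := hv'
  · obtain ⟨i, rfl⟩ := h1; obtain ⟨j, hj⟩ := h2
    obtain ⟨rfl, rfl, rfl⟩ := VCVertex.node.inj hj
    exact hne rfl
  · obtain ⟨i, rfl⟩ := h1; rcases h2 with h2 | h2 | h2 | h2 <;> simp_all
  · obtain ⟨i, rfl⟩ := h2; rcases h1 with h1 | h1 | h1 | h1 <;> simp_all
  · rcases h1 with h1 | h1 | h1 | h1 <;> rcases h2 with h2 | h2 | h2 | h2 <;>
      subst h1 <;> simp_all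

lemma vc_clique_card (s ℓ : Bool) :
    (Finset.univ.image (node s ℓ) : Finset (VCVertex k logk)).card = k := by
  rw [Finset.card_image_of_injective _ (fun i j hij => by injection hij),
    Finset.card_univ, Fintype.card_fin]

lemma vc_clique_lb (hU : IsVertexCover (vcGraph k logk x y) U)
    (F : Finset (VCVertex k logk)) (hF : ∀ v, v ∈ F ↔ v ∈ U) (s ℓ : Bool) :
    k - 1 ≤ ((Finset.univ.image (node s ℓ) : Finset (VCVertex k logk)) ∩ F).card := by
  set C : Finset (VCVertex k logk) := Finset.univ.image (node s ℓ) with hC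
  have hCcard : C.card = k := vc_clique_card s ℓ
  have hmiss : (C \ F).card ≤ 1 := by
    apply Finset.card_le_one.mpr
    intro a ha b hb
    rw [Finset.mem_sdiff] at ha hb
    obtain ⟨haC, haF⟩ := ha; obtain ⟨hbC, hbF⟩ := hb
    simp only [hC, Finset.mem_image, Finset.mem_univ, true_and] at haC hbC
    obtain ⟨i, rfl⟩ := haC; obtain ⟨j, rfl⟩ := hbC
    by_contra hne
    have hij : i ≠ j := fun hh => hne (by rw [hh])
    have := hU _ _ (vc_adj (by simp [hij]) (Or.inl ⟨s, ℓ, i, j, hij, rfl, rfl⟩))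
    rcases this with h1 | h1
    · exact haF ((hF _).mpr h1)
    · exact hbF ((hF _).mpr h1)
  have := Finset.card_inter_add_card_sdiff C F
  omega

lemma vc_cyc_lb (hU : IsVertexCover (vcGraph k logk x y) U)
    (F : Finset (VCVertex k logk)) (hF : ∀ v, v ∈ F ↔ v ∈ U) (ℓ : Bool) (h : Fin logk) :
    2 ≤ (({f false ℓ h, t false ℓ h, f true ℓ h, t true ℓ h} :
      Finset (VCVertex k logk)) ∩ F).card := by
  obtain ⟨e1, -, e3, -⟩ := vc_cycle_cover hU ℓ h
  rcases e1 with h1 | h1 <;> rcases e3 with h3 | h3 <;>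
    exact Finset.one_lt_card.mpr
      ⟨_, Finset.mem_inter.mpr ⟨by simp, (hF _).mpr h1⟩,
       _, Finset.mem_inter.mpr ⟨by simp, (hF _).mpr h3⟩, by simp⟩

lemma vc_cyc_exact (hU : IsVertexCover (vcGraph k logk x y) U)
    (F : Finset (VCVertex k logk)) (hF : ∀ v, v ∈ F ↔ v ∈ U) (ℓ : Bool) (h : Fin logk)
    (h2 : (({f false ℓ h, t false ℓ h, f true ℓ h, t true ℓ h} :
      Finset (VCVertex k logk)) ∩ F).card = 2) :
    ¬(t false ℓ h ∈ U ∧ f true ℓ h ∈ U) ∧ ¬(f false ℓ h ∈ U ∧ t true ℓ h ∈ U) := by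
  obtain ⟨e1, e2, e3, e4⟩ := vc_cycle_cover hU ℓ h
  constructor
  · rintro ⟨ha, hb⟩
    rcases e4 with hc | hc
    · have hsub : ({t false ℓ h, f true ℓ h, t true ℓ h} : Finset (VCVertex k logk)) ⊆
          ({f false ℓ h, t false ℓ h, f true ℓ h, t true ℓ h} : Finset (VCVertex k logk)) ∩ F := by
        intro v hv; simp only [Finset.mem_insert, Finset.mem_singleton] at hv
        rcases hv with rfl | rfl | rfl <;>
          exact Finset.mem_inter.mpr ⟨by simp, (hF _).mpr (by assumption)⟩
      have hle := Finset.card_le_card hsub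
      have h3 : ({t false ℓ h, f true ℓ h, t true ℓ h} : Finset (VCVertex k logk)).card = 3 := by
        rw [Finset.card_insert_of_notMem (by simp), Finset.card_insert_of_notMem (by simp),
          Finset.card_singleton]
      omega
    · have hsub : ({t false ℓ h, f true ℓ h, f false ℓ h} : Finset (VCVertex k logk)) ⊆
          ({f false ℓ h, t false ℓ h, f true ℓ h, t true ℓ h} : Finset (VCVertex k logk)) ∩ F := by
        intro v hv; simp only [Finset.mem_insert, Finset.mem_singleton] at hv
        rcases hv with rfl | rfl | rfl <;>
          exact Finset.mem_inter.mpr ⟨by simp, (hF _).mpr (by assumption)⟩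
      have hle := Finset.card_le_card hsub
      have h3 : ({t false ℓ h, f true ℓ h, f false ℓ h} : Finset (VCVertex k logk)).card = 3 := by
        rw [Finset.card_insert_of_notMem (by simp), Finset.card_insert_of_notMem (by simp),
          Finset.card_singleton]
      omega
  · rintro ⟨ha, hb⟩
    rcases e2 with hc | hc
    · have hsub : ({f false ℓ h, t true ℓ h, t false ℓ h} : Finset (VCVertex k logk)) ⊆
          ({f false ℓ h, t false ℓ h, f true ℓ h, t true ℓ h} : Finset (VCVertex k logk)) ∩ F := by
        intro v hv; simp only [Finset.mem_insert, Finset.mem_singleton] at hv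
        rcases hv with rfl | rfl | rfl <;>
          exact Finset.mem_inter.mpr ⟨by simp, (hF _).mpr (by assumption)⟩
      have hle := Finset.card_le_card hsub
      have h3 : ({f false ℓ h, t true ℓ h, t false ℓ h} : Finset (VCVertex k logk)).card = 3 := by
        rw [Finset.card_insert_of_notMem (by simp), Finset.card_insert_of_notMem (by simp),
          Finset.card_singleton]
      omega
    · have hsub : ({f false ℓ h, t true ℓ h, f true ℓ h} : Finset (VCVertex k logk)) ⊆
          ({f false ℓ h, t false ℓ h, f true ℓ h, t true ℓ h} : Finset (VCVertex k logk)) ∩ F := by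
        intro v hv; simp only [Finset.mem_insert, Finset.mem_singleton] at hv
        rcases hv with rfl | rfl | rfl <;>
          exact Finset.mem_inter.mpr ⟨by simp, (hF _).mpr (by assumption)⟩
      have hle := Finset.card_le_card hsub
      have h3 : ({f false ℓ h, t true ℓ h, f true ℓ h} : Finset (VCVertex k logk)).card = 3 := by
        rw [Finset.card_insert_of_notMem (by simp), Finset.card_insert_of_notMem (by simp),
          Finset.card_singleton]
      omega

lemma vc_bits_eq (hU : IsVertexCover (vcGraph k logk x y) U)
    (F : Finset (VCVertex k logk)) (hF : ∀ v, v ∈ F ↔ v ∈ U) (ℓ : Bool) {i i' : Fin k}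
    (hi : node false ℓ i ∉ U) (hi' : node true ℓ i' ∉ U)
    (hexact : ∀ h : Fin logk, (({f false ℓ h, t false ℓ h, f true ℓ h, t true ℓ h} :
      Finset (VCVertex k logk)) ∩ F).card = 2)
    (h : Fin logk) : i.val.testBit h.val = i'.val.testBit h.val := by
  have b1 := vc_cover_bin hU false ℓ i hi h
  have b2 := vc_cover_bin hU true ℓ i' hi' h
  obtain ⟨hmix1, hmix2⟩ := vc_cyc_exact hU F hF ℓ h (hexact h)
  cases hb : i.val.testBit h.val <;> cases hb' : i'.val.testBit h.val <;>
    rw [hb] at b1 <;> rw [hb'] at b2 <;> simp at b1 b2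
  · exact absurd ⟨b1, b2⟩ hmix2
  · exact absurd ⟨b1, b2⟩ hmix1

end VCAux

/-- if `U` is a vertex cover of the vertex-cover lower-bound graph
`G_{x,y}` of cardinality `4(k − 1) + 4·log k`, then there exist indices `i, j`
such that none of `a_1^i`, `a_2^j`, `b_1^i`, `b_2^j` belongs to `U`. -/
theorem vcGraph_cover_misses_four (k logk : ℕ) (hk : 2 ≤ k) (hpow : k = 2 ^ logk)
    (x y : Fin k → Fin k → Bool) (U : Set (VCVertex k logk))
    (hU : IsVertexCover (vcGraph k logk x y) U)
    (hcard : U.ncard = 4 * (k - 1) + 4 * logk) :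
    ∃ i j : Fin k,
      VCVertex.node false false i ∉ U ∧ VCVertex.node false true j ∉ U ∧
      VCVertex.node true false i ∉ U ∧ VCVertex.node true true j ∉ U := by
  classical
  open VCVertex Finset in
  have hUfin : U.Finite := Set.toFinite U
  set F := hUfin.toFinset with hFdef
  have hF : ∀ v, v ∈ F ↔ v ∈ U := fun v => hUfin.mem_toFinset
  have hFcard : F.card = 4 * (k - 1) + 4 * logk := by
    rw [← Set.ncard_eq_toFinset_card U hUfin]; exact hcard
  have hbiU : (Finset.univ.biUnion (vcPart k logk F)).card
      = ∑ z, (vcPart k logk F z).card :=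
    Finset.card_biUnion (fun z _ z' _ hzz => vcPart_disjoint F z z' hzz)
  have hsub : Finset.univ.biUnion (vcPart k logk F) ⊆ F := by
    intro v hv
    rw [Finset.mem_biUnion] at hv
    obtain ⟨z, -, hz⟩ := hv
    rcases z with ⟨s, ℓ⟩ | ⟨ℓ, h⟩ <;>
      · simp only [vcPart, Finset.mem_inter] at hz; exact hz.2
  have hsumle : ∑ z, (vcPart k logk F z).card ≤ F.card := by
    rw [← hbiU]; exact Finset.card_le_card hsub
  have hlb : ∀ z ∈ (Finset.univ : Finset ((Bool × Bool) ⊕ (Bool × Fin logk))),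
      vcb k z ≤ (vcPart k logk F z).card := by
    rintro (⟨s, ℓ⟩ | ⟨ℓ, h⟩) -
    · exact vc_clique_lb hU F hF s ℓ
    · exact vc_cyc_lb hU F hF ℓ h
  have hbsum : ∑ z : (Bool × Bool) ⊕ (Bool × Fin logk), vcb (logk := logk) k z
      = 4 * (k - 1) + 4 * logk := by
    rw [Fintype.sum_sum_type]
    simp only [vcb, Finset.sum_const, Finset.card_univ, Fintype.card_prod,
      Fintype.card_bool, Fintype.card_fin, smul_eq_mul]
    omega
  have heq : ∀ z ∈ (Finset.univ : Finset ((Bool × Bool) ⊕ (Bool × Fin logk))),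
      vcb k z = (vcPart k logk F z).card := by
    apply (Finset.sum_eq_sum_iff_of_le hlb).mp
    have h1 := Finset.sum_le_sum hlb
    omega
  have hmiss : ∀ s ℓ : Bool, ∃ i : Fin k, VCVertex.node s ℓ i ∉ U := by
    intro s ℓ
    have hcl := (heq (Sum.inl (s, ℓ)) (Finset.mem_univ _)).symm
    simp only [vcPart, vcb] at hcl
    have hCcard : (Finset.univ.image (node s ℓ) : Finset (VCVertex k logk)).card = k :=
      vc_clique_card s ℓ
    have hne : ((Finset.univ.image (node s ℓ) : Finset (VCVertex k logk)) \ F).Nonempty := by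
      rw [← Finset.card_pos]
      have := Finset.card_inter_add_card_sdiff
        (Finset.univ.image (node s ℓ) : Finset (VCVertex k logk)) F
      omega
    obtain ⟨v, hv⟩ := hne
    rw [Finset.mem_sdiff] at hv
    obtain ⟨hvC, hvF⟩ := hv
    simp only [Finset.mem_image, Finset.mem_univ, true_and] at hvC
    obtain ⟨i, rfl⟩ := hvC
    exact ⟨i, fun hh => hvF ((hF _).mpr hh)⟩
  obtain ⟨i1, hi1⟩ := hmiss false false
  obtain ⟨j1, hj1⟩ := hmiss false true
  obtain ⟨i2, hi2⟩ := hmiss true false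
  obtain ⟨j2, hj2⟩ := hmiss true true
  have hexact : ∀ (ℓ : Bool) (h : Fin logk),
      (({f false ℓ h, t false ℓ h, f true ℓ h, t true ℓ h} :
        Finset (VCVertex k logk)) ∩ F).card = 2 := by
    intro ℓ h
    have := (heq (Sum.inr (ℓ, h)) (Finset.mem_univ _)).symm
    simpa [vcPart, vcb] using this
  have key : ∀ (a b : Fin k) (ℓ : Bool), VCVertex.node false ℓ a ∉ U →
      VCVertex.node true ℓ b ∉ U → a = b := by
    intro a b ℓ ha hb
    apply Fin.ext
    apply Nat.eq_of_testBit_eq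
    intro n
    by_cases hn : n < logk
    · exact vc_bits_eq hU F hF ℓ ha hb (fun h => hexact ℓ h) ⟨n, hn⟩
    · have hk2 : 2 ^ logk ≤ 2 ^ n := Nat.pow_le_pow_right (by norm_num) (le_of_not_gt hn)
      rw [Nat.testBit_lt_two_pow (lt_of_lt_of_le (by rw [← hpow]; exact a.isLt) hk2),
        Nat.testBit_lt_two_pow (lt_of_lt_of_le (by rw [← hpow]; exact b.isLt) hk2)]
  have hieq : i1 = i2 := key i1 i2 false hi1 hi2
  have hjeq : j1 = j2 := key j1 j2 true hj1 hj2
  exact ⟨i1, j1, hi1, hj1, by rw [hieq]; exact hi2, by rw [hjeq]; exact hj2⟩
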